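/- arXiv:1810.07414 — 5 statements merged into one kernel-verified Lean document; each statement's English description precedes it below -/
import Mathlib

section
/- Feasibility of fairness: in a transition system in which only countably many tasks are enabled in each state, every finite path can be extended to a strongly fair (hence also weakly fair) path. That is, for every finite path π₀ there exists a strongly fair path π having π₀ as a prefix. -/
/-- A transition system: states `S`, transitions `Tr`, with source/target maps
and a set of initial states. -/
structure TS (S Tr : Type) where
  source : Tr → S
  target : Tr → S
  init : Set S

/-- A (finite or infinite) path in a transition system: `len` is the number of
transitions (`⊤` for an infinite path); states are indexed `0..len` and
transitions `0..len-1`. -/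
structure TSPath {S Tr : Type} (G : TS S Tr) where
  len : ℕ∞
  state : ℕ → S
  trans : ℕ → Tr
  src_ok : ∀ i : ℕ, (i : ℕ∞) < len → G.source (trans i) = state i
  tgt_ok : ∀ i : ℕ, (i : ℕ∞) < len → G.target (trans i) = state (i + 1)

variable {S Tr : Type}

/-- A task `T` is enabled in a state `s` if some transition in `T` has source `s`. -/
def TS.enabled (G : TS S Tr) (T : Set Tr) (s : S) : Prop :=
  ∃ t ∈ T, G.source t = s

/-- A path is rooted if it starts in an initial state. -/
def TSPath.rooted {G : TS S Tr} (π : TSPath G) : Prop :=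
  π.state 0 ∈ G.init

/-- The path visits the set of states `Ge`. -/
def TSPath.visits {G : TS S Tr} (π : TSPath G) (Ge : Set S) : Prop :=
  ∃ i : ℕ, (i : ℕ∞) ≤ π.len ∧ π.state i ∈ Ge

/-- The task `T` occurs in the suffix of `π` starting at index `k`. -/
def TSPath.occursFrom {G : TS S Tr} (π : TSPath G) (T : Set Tr) (k : ℕ) : Prop :=
  ∃ i : ℕ, k ≤ i ∧ (i : ℕ∞) < π.len ∧ π.trans i ∈ T

/-- `T` is perpetually enabled on the suffix of `π` starting at index `k`:
enabled in every state of that suffix. -/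
def TSPath.perpEnabledFrom {G : TS S Tr} (π : TSPath G) (T : Set Tr) (k : ℕ) : Prop :=
  ∀ i : ℕ, k ≤ i → (i : ℕ∞) ≤ π.len → G.enabled T (π.state i)

/-- `T` is relentlessly enabled on the suffix of `π` starting at index `k`:
every suffix of that suffix contains a state in which `T` is enabled. -/
def TSPath.relEnabledFrom {G : TS S Tr} (π : TSPath G) (T : Set Tr) (k : ℕ) : Prop :=
  ∀ j : ℕ, k ≤ j → (j : ℕ∞) ≤ π.len →
    ∃ i : ℕ, j ≤ i ∧ (i : ℕ∞) ≤ π.len ∧ G.enabled T (π.state i)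

/-- Weak fairness: for every suffix, each task perpetually enabled on that
suffix occurs in it. -/
def TSPath.weaklyFair {G : TS S Tr} (π : TSPath G) (𝒯 : Set (Set Tr)) : Prop :=
  ∀ T ∈ 𝒯, ∀ k : ℕ, (k : ℕ∞) ≤ π.len → π.perpEnabledFrom T k → π.occursFrom T k

/-- Strong fairness: for every suffix, each task relentlessly enabled on that
suffix occurs in it. -/
def TSPath.stronglyFair {G : TS S Tr} (π : TSPath G) (𝒯 : Set (Set Tr)) : Prop :=
  ∀ T ∈ 𝒯, ∀ k : ℕ, (k : ℕ∞) ≤ π.len → π.relEnabledFrom T k → π.occursFrom T k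

/-- A path is progressing if it is infinite or its last state has no outgoing
transition. -/
def TSPath.progressing {G : TS S Tr} (π : TSPath G) : Prop :=
  π.len = ⊤ ∨ ∃ n : ℕ, π.len = (n : ℕ∞) ∧ ∀ t : Tr, G.source t ≠ π.state n

/-- `π₀` is a prefix of `π`. -/
def TSPath.isPrefixOf {G : TS S Tr} (π₀ π : TSPath G) : Prop :=
  π₀.len ≤ π.len ∧ (∀ i : ℕ, (i : ℕ∞) ≤ π₀.len → π.state i = π₀.state i) ∧
    (∀ i : ℕ, (i : ℕ∞) < π₀.len → π.trans i = π₀.trans i)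

/-!
Fix, for every state `x`, an enumeration `E x` of the countably many tasks enabled in `x`, and let
the number `m = Nat.pair i j` name the task `E (s i) j`, where `s` is the path being built; every
task enabled somewhere from step `i` on gets a name `≥ i`. Extend the path step by step: a name
`m` is *pending* at step `n ≥ m` if its task is enabled in `s n` but has not occurred since step
`m`, and the next transition serves the least pending name. If a task named `m` were enabled
infinitely often but never occurred after `m`, then `m` would be pending infinitely often, so
infinitely many steps would serve names `< m`; but a name served at step `n` is not pending at any
later step, so distinct steps serve distinct names, which is impossible. The extension stops only
in a deadlock, where fairness holds trivially.
-/

open Filter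

variable {G : TS S Tr}

theorem exists_isFixedPt_of_causal {α : Type*} [Nonempty α] (F : (ℕ → α) → ℕ → α)
    (hF : ∀ f g n, (∀ i < n, f i = g i) → F f n = F g n) : ∃ x, Function.IsFixedPt F x := by
  classical
  let step : ∀ n, (∀ i < n, α) → α := fun n prev =>
    F (fun i => if h : i < n then prev i h else Classical.arbitrary α) n
  let x : ℕ → α := fun n => Nat.strongRec step n
  refine ⟨x, funext fun n => ?_⟩
  show F x n = Nat.strongRec step n
  rw [Nat.strongRec_eq]
  exact hF _ _ n fun i hi => by simp [x, hi]

section Scheduling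

variable (G) (task : ℕ → Set Tr) (s : ℕ → S) (t : ℕ → Tr)

def IsPending (n m : ℕ) : Prop :=
  m ≤ n ∧ G.enabled (task m) (s n) ∧ ∀ l, m ≤ l → l < n → t l ∉ task m

def IsFairChoice (n : ℕ) (u : Tr) : Prop :=
  ((∃ v, G.source v = s n) → G.source u = s n) ∧
    ∀ m, IsPending G task s t n m → ∃ m' ≤ m, IsPending G task s t n m' ∧ u ∈ task m'

theorem exists_isFairChoice [Nonempty Tr] (n : ℕ) : ∃ u, IsFairChoice G task s t n u := by
  classical
  by_cases hp : ∃ m, IsPending G task s t n m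
  · obtain ⟨u, hu, hsrc⟩ := (Nat.find_spec hp).2.1
    exact ⟨u, fun _ => hsrc, fun m hm => ⟨Nat.find hp, Nat.find_min' hp hm, Nat.find_spec hp, hu⟩⟩
  · by_cases hlive : ∃ v, G.source v = s n
    · obtain ⟨v, hv⟩ := hlive
      exact ⟨v, fun _ => hv, fun m hm => absurd ⟨m, hm⟩ hp⟩
    · exact ⟨Classical.arbitrary Tr, fun h => absurd h hlive, fun m hm => absurd ⟨m, hm⟩ hp⟩

variable {G task s t}

theorem isPending_congr {task' : ℕ → Set Tr} {s' : ℕ → S} {t' : ℕ → Tr} {n m : ℕ}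
    (htask : ∀ m ≤ n, task m = task' m) (hs : s n = s' n) (ht : ∀ l < n, t l = t' l) :
    IsPending G task s t n m ↔ IsPending G task' s' t' n m := by
  rcases le_or_gt m n with hmn | hnm
  · simp +contextual [IsPending, hmn, htask m hmn, hs, ht]
  · simp [IsPending, hnm.not_ge]

theorem isFairChoice_congr {task' : ℕ → Set Tr} {s' : ℕ → S} {t' : ℕ → Tr} {n : ℕ} {u : Tr}
    (htask : ∀ m ≤ n, task m = task' m) (hs : s n = s' n) (ht : ∀ l < n, t l = t' l) :
    IsFairChoice G task s t n u ↔ IsFairChoice G task' s' t' n u := by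
  simp only [IsFairChoice, hs, isPending_congr htask hs ht]
  refine and_congr_right' <| forall_congr' fun m => imp_congr_right fun _ =>
    exists_congr fun m' => and_congr_right fun _ => and_congr_right fun hpend => ?_
  rw [htask m' hpend.1]

theorem exists_mem_of_frequently_enabled {n₀ m : ℕ}
    (hfair : ∀ n ≥ n₀, IsFairChoice G task s t n (t n)) (hm : n₀ ≤ m)
    (hfreq : ∃ᶠ n in atTop, G.enabled (task m) (s n)) : ∃ l ≥ m, t l ∈ task m := by
  by_contra! hnot
  set A := {n | G.enabled (task m) (s n) ∧ m ≤ n}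
  have hA : A.Infinite :=
    Nat.frequently_atTop_iff_infinite.1 (hfreq.and_eventually (eventually_ge_atTop m))
  have hserve : ∀ n ∈ A, ∃ m' < m, IsPending G task s t n m' ∧ t n ∈ task m' := by
    rintro n ⟨hen, hmn⟩
    obtain ⟨m', hm'm, hpend, hmem⟩ :=
      (hfair n (hm.trans hmn)).2 m ⟨hmn, hen, fun l hl _ => hnot l hl⟩
    exact ⟨m', hm'm.lt_of_ne (by rintro rfl; exact hnot n hmn hmem), hpend, hmem⟩
  choose! served hlt hpend hmem using hserve
  have hinj : ∀ a ∈ A, ∀ b ∈ A, a < b → served a ≠ served b := by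
    intro a ha b hb hab heq
    exact (hpend b hb).2.2 a (heq ▸ (hpend a ha).1) hab (heq ▸ hmem a ha)
  obtain ⟨a, ha, b, hb, hne, heq⟩ :=
    hA.exists_ne_map_eq_of_mapsTo (fun n hn => Set.mem_Iio.2 (hlt n hn)) (Set.finite_Iio m)
  rcases hne.lt_or_gt with hab | hab
  · exact hinj a ha b hb hab heq
  · exact hinj b hb a ha hab heq.symm

end Scheduling

def namedTask (E : S → ℕ → Set Tr) (s : ℕ → S) (m : ℕ) : Set Tr :=
  E (s m.unpair.1) m.unpair.2

theorem namedTask_congr {E : S → ℕ → Set Tr} {s s' : ℕ → S} {n : ℕ} (hs : ∀ i ≤ n, s i = s' i)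
    {m : ℕ} (hm : m ≤ n) : namedTask E s m = namedTask E s' m := by
  rw [namedTask, namedTask, hs _ ((Nat.unpair_left_le m).trans hm)]

theorem exists_namedTask_eq {E : S → ℕ → Set Tr} {s : ℕ → S} {i : ℕ} {T : Set Tr}
    (hT : T ∈ Set.range (E (s i))) : ∃ m ≥ i, namedTask E s m = T := by
  obtain ⟨j, rfl⟩ := hT
  exact ⟨Nat.pair i j, Nat.left_le_pair i j, by simp [namedTask]⟩

def TS.statesFrom (G : TS S Tr) (s₀ : S) (t : ℕ → Tr) : ℕ → S
  | 0 => s₀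
  | n + 1 => G.target (t n)

theorem TS.statesFrom_congr {s₀ : S} {t t' : ℕ → Tr} {n : ℕ} (ht : ∀ l < n, t l = t' l) :
    ∀ i ≤ n, G.statesFrom s₀ t i = G.statesFrom s₀ t' i
  | 0, _ => rfl
  | i + 1, hi => by rw [statesFrom, statesFrom, ht i hi]

theorem TSPath.statesFrom_eq_state (π₀ : TSPath G) {t : ℕ → Tr}
    (ht : ∀ i : ℕ, (i : ℕ∞) < π₀.len → t i = π₀.trans i) :
    ∀ i : ℕ, (i : ℕ∞) ≤ π₀.len → G.statesFrom (π₀.state 0) t i = π₀.state i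
  | 0, _ => rfl
  | i + 1, hi => by
    have hlt : (i : ℕ∞) < π₀.len := lt_of_lt_of_le (by exact_mod_cast i.lt_succ_self) hi
    rw [TS.statesFrom, ht i hlt, π₀.tgt_ok i hlt]

theorem TS.exists_fair_run [Nonempty Tr] (G : TS S Tr) (E : S → ℕ → Set Tr) (s₀ : S)
    (p : ℕ → Tr) (n₀ : ℕ) :
    ∃ t : ℕ → Tr, (∀ n < n₀, t n = p n) ∧ ∀ n ≥ n₀,
      IsFairChoice G (namedTask E (G.statesFrom s₀ t)) (G.statesFrom s₀ t) t n (t n) := by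
  classical
  let F : (ℕ → Tr) → ℕ → Tr := fun t n => if n < n₀ then p n else
    Classical.epsilon (IsFairChoice G (namedTask E (G.statesFrom s₀ t)) (G.statesFrom s₀ t) t n)
  obtain ⟨t, ht⟩ := exists_isFixedPt_of_causal F fun f g n hfg => by
    have hs := G.statesFrom_congr (s₀ := s₀) hfg
    refine if_congr Iff.rfl rfl (congrArg _ (funext fun u => propext ?_))
    exact isFairChoice_congr (fun m hm => namedTask_congr hs hm) (hs n le_rfl) hfg
  refine ⟨t, fun n hn => ?_, fun n hn => ?_⟩
  · rw [← congrFun ht n]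
    simp [F, hn]
  · rw [← congrFun ht n]
    simp only [F, if_neg (not_lt.2 hn)]
    exact Classical.epsilon_spec (exists_isFairChoice ..)

theorem TS.exists_progressing_path (G : TS S Tr) (s : ℕ → S) (t : ℕ → Tr)
    (hsrc : ∀ i, (∃ v, G.source v = s i) → G.source (t i) = s i)
    (htgt : ∀ i, G.target (t i) = s (i + 1)) :
    ∃ π : TSPath G, π.state = s ∧ π.trans = t ∧ π.progressing := by
  classical
  by_cases hdead : ∃ N, ∀ v, G.source v ≠ s N
  · refine ⟨⟨Nat.find hdead, s, t, fun i hi => hsrc i ?_, fun i _ => htgt i⟩, rfl, rfl,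
      Or.inr ⟨_, rfl, Nat.find_spec hdead⟩⟩
    simpa using Nat.find_min hdead (by exact_mod_cast hi)
  · push Not at hdead
    exact ⟨⟨⊤, s, t, fun i _ => hsrc i (hdead i), fun i _ => htgt i⟩, rfl, rfl, Or.inl rfl⟩

/-- `π` cannot stop strictly inside `π₀`: every state of `π₀` before its last one has an outgoing
transition. -/
theorem TSPath.isPrefixOf_of_progressing {π₀ π : TSPath G} (hprog : π.progressing)
    (hs : ∀ i : ℕ, (i : ℕ∞) ≤ π₀.len → π.state i = π₀.state i)
    (ht : ∀ i : ℕ, (i : ℕ∞) < π₀.len → π.trans i = π₀.trans i) : π₀.isPrefixOf π := by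
  refine ⟨?_, hs, ht⟩
  rcases hprog with hinf | ⟨N, hN, hdead⟩
  · simp [hinf]
  · rw [hN]
    by_contra! hlt
    exact hdead (π₀.trans N) (by rw [π₀.src_ok N hlt, hs N hlt.le])

theorem TSPath.stronglyFair_of_deadlock {π : TSPath G} {N : ℕ} (hN : π.len = N)
    (hdead : ∀ u, G.source u ≠ π.state N) (𝒯 : Set (Set Tr)) : π.stronglyFair 𝒯 := by
  intro T _ k hk hrel
  rw [hN] at hk
  obtain ⟨i, hNi, hiN, u, -, hu⟩ := hrel N (by exact_mod_cast hk) hN.ge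
  rw [hN] at hiN
  obtain rfl : i = N := le_antisymm (by exact_mod_cast hiN) hNi
  exact absurd hu (hdead u)

theorem TSPath.stronglyFair_of_isFairChoice {π : TSPath G} (hinf : π.len = ⊤)
    {𝒯 : Set (Set Tr)} {E : S → ℕ → Set Tr}
    (hE : ∀ x, {T | T ∈ 𝒯 ∧ G.enabled T x} ⊆ Set.range (E x)) {n₀ : ℕ}
    (hfair : ∀ n ≥ n₀, IsFairChoice G (namedTask E π.state) π.state π.trans n (π.trans n)) :
    π.stronglyFair 𝒯 := by
  intro T hT k _ hrel
  have hfreq : ∃ᶠ n in atTop, G.enabled T (π.state n) := by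
    refine frequently_atTop.2 fun a => ?_
    obtain ⟨i, hi, -, hen⟩ := hrel (max a k) (le_max_right a k) (by simp [hinf])
    exact ⟨i, le_of_max_le_left hi, hen⟩
  obtain ⟨i, hen, hi⟩ := (hfreq.and_eventually (eventually_ge_atTop (max k n₀))).exists
  obtain ⟨m, hm, rfl⟩ := exists_namedTask_eq (hE _ ⟨hT, hen⟩)
  obtain ⟨l, hl, hmem⟩ :=
    exists_mem_of_frequently_enabled hfair ((le_max_right k n₀).trans (hi.trans hm)) hfreq
  exact ⟨l, (le_max_left k n₀).trans (hi.trans (hm.trans hl)), by simp [hinf], hmem⟩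

/-- Feasibility of fairness: if in each state only countably
many tasks are enabled, then every finite path extends to a strongly fair
path. -/
theorem feasibility_of_strong_fairness (G : TS S Tr) (𝒯 : Set (Set Tr))
    (hcount : ∀ s : S, Set.Countable {T | T ∈ 𝒯 ∧ G.enabled T s})
    (π₀ : TSPath G) (hfin : π₀.len ≠ ⊤) :
    ∃ π : TSPath G, π₀.isPrefixOf π ∧ π.stronglyFair 𝒯 := by
  have : Nonempty Tr := ⟨π₀.trans 0⟩
  obtain ⟨n₀, hn₀⟩ := ENat.ne_top_iff_exists.1 hfin
  choose E hE using fun x => Set.countable_iff_exists_subset_range.1 (hcount x)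
  obtain ⟨t, hpre, hfair⟩ := G.exists_fair_run E (π₀.state 0) π₀.trans n₀
  have hpre' : ∀ i : ℕ, (i : ℕ∞) < π₀.len → t i = π₀.trans i :=
    fun i hi => hpre i (by rw [← hn₀] at hi; exact_mod_cast hi)
  have hs := π₀.statesFrom_eq_state hpre'
  obtain ⟨π, hπs, rfl, hprog⟩ := G.exists_progressing_path (G.statesFrom (π₀.state 0) t) t
    (fun i hlive => if hi : (i : ℕ∞) < π₀.len then by rw [hpre' i hi, hs i hi.le, π₀.src_ok i hi]
      else (hfair i (by rw [← hn₀] at hi; exact_mod_cast not_lt.1 hi)).1 hlive) (fun _ => rfl)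
  rw [← hπs] at hs hfair
  refine ⟨π, TSPath.isPrefixOf_of_progressing hprog hs hpre', ?_⟩
  rcases hprog with hinf | ⟨N, hN, hdead⟩
  · exact π.stronglyFair_of_isFairChoice hinf hE hfair
  · exact π.stronglyFair_of_deadlock hN hdead 𝒯
end

section
/- If every weak-fairness task of one task structure 𝒯₁ is a union of tasks from a finite task structure 𝒯₂ (both 𝒯₁ and 𝒯₂ finite), then every path that is strongly fair with respect to 𝒯₂ is strongly fair with respect to 𝒯₁. -/
variable {S Tr : Type}

/-- If every task of a finite task structure `𝒯₁` is a union of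
tasks from a finite task structure `𝒯₂`, then every path strongly fair
w.r.t. `𝒯₂` is strongly fair w.r.t. `𝒯₁`. -/
theorem stronglyFair_of_union_tasks (G : TS S Tr) (𝒯₁ 𝒯₂ : Set (Set Tr))
    (h1 : 𝒯₁.Finite) (h2 : 𝒯₂.Finite)
    (hun : ∀ T ∈ 𝒯₁, ∃ 𝒰 ⊆ 𝒯₂, T = ⋃₀ 𝒰)
    (π : TSPath G) (h : π.stronglyFair 𝒯₂) : π.stronglyFair 𝒯₁ := by
  intro T hT k hk hrel
  obtain ⟨𝒰, hsub, rfl⟩ := hun T hT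
  by_cases hex : ∃ T' ∈ 𝒰, π.relEnabledFrom T' k
  · obtain ⟨T', hT', hrel'⟩ := hex
    obtain ⟨i, hki, hil, hmem⟩ := h T' (hsub hT') k hk hrel'
    exact ⟨i, hki, hil, Set.mem_sUnion.2 ⟨T', hT', hmem⟩⟩
  · exfalso
    push_neg at hex
    have hfin : 𝒰.Finite := h2.subset hsub
    have hw : ∀ T' ∈ 𝒰, ∃ j : ℕ, k ≤ j ∧ (j : ℕ∞) ≤ π.len ∧
        ∀ i : ℕ, j ≤ i → (i : ℕ∞) ≤ π.len → ¬ G.enabled T' (π.state i) := by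
      intro T' hT'
      have hne := hex T' hT'
      unfold TSPath.relEnabledFrom at hne
      push_neg at hne
      exact hne
    choose! f hf1 hf2 hf3 using hw
    set s := hfin.toFinset with hs
    set J := k ⊔ s.sup f with hJ
    have hJlen : (J : ℕ∞) ≤ π.len := by
      rcases hl : π.len with _ | n
      · exact le_top
      · have hJn : J ≤ n := by
          refine sup_le ?_ ?_
          · rw [hl] at hk; exact WithTop.coe_le_coe.1 hk
          · refine Finset.sup_le fun T' hT' => ?_
            have := hf2 T' (hfin.mem_toFinset.1 hT')
            rw [hl] at this; exact WithTop.coe_le_coe.1 this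
        exact WithTop.coe_le_coe.2 hJn
    obtain ⟨i, hJi, hil, henab⟩ := hrel J le_sup_left hJlen
    obtain ⟨t, ht, hsrc⟩ := henab
    obtain ⟨T', hT', htT'⟩ := ht
    have hfT' : f T' ≤ i := le_trans (le_trans (Finset.le_sup (hfin.mem_toFinset.2 hT')) (le_max_right k _)) hJi
    exact hf3 T' hT' i hfT' hil ⟨t, htT', hsrc⟩
end

section
/- If a finite union of tasks is relentlessly enabled on a path, then at least one of the tasks in the union is relentlessly enabled on the path. -/
variable {S Tr : Type}

/-! Relentless enabledness of `T` says that `T` is enabled frequently along `atTop` on the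
state indices of the suffix. "Frequently" distributes over finite unions, being dual to
"eventually", which is closed under finite intersections. -/

theorem TS.enabled_iUnion {ι : Sort*} (G : TS S Tr) (T : ι → Set Tr) (s : S) :
    G.enabled (⋃ i, T i) s ↔ ∃ i, G.enabled (T i) s := by
  simp only [TS.enabled, Set.mem_iUnion]
  grind

namespace TSPath

variable {G : TS S Tr} (π : TSPath G)

/-- On a finite path `atTop` is the principal filter at the last state. The hypothesis `hk`
keeps the index type nonempty: otherwise `atTop = ⊥` while `relEnabledFrom` holds vacuously. -/
theorem relEnabledFrom_iff_frequently_atTop {T : Set Tr} {k : ℕ} (hk : (k : ℕ∞) ≤ π.len) :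
    π.relEnabledFrom T k ↔
      ∃ᶠ i : {i : ℕ // k ≤ i ∧ (i : ℕ∞) ≤ π.len} in Filter.atTop, G.enabled T (π.state i) := by
  have : Nonempty {i : ℕ // k ≤ i ∧ (i : ℕ∞) ≤ π.len} := ⟨⟨k, le_rfl, hk⟩⟩
  rw [Filter.frequently_atTop]
  constructor
  · rintro h ⟨j, hkj, hj⟩
    obtain ⟨i, hji, hi, hT⟩ := h j hkj hj
    exact ⟨⟨i, hkj.trans hji, hi⟩, hji, hT⟩
  · intro h j hkj hj
    obtain ⟨⟨i, _, hi⟩, hji, hT⟩ := h ⟨j, hkj, hj⟩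
    exact ⟨i, hji, hi, hT⟩

theorem relEnabledFrom_iUnion_iff {ι : Type*} [Finite ι] {T : ι → Set Tr} {k : ℕ}
    (hk : (k : ℕ∞) ≤ π.len) :
    π.relEnabledFrom (⋃ i, T i) k ↔ ∃ i, π.relEnabledFrom (T i) k := by
  simp only [π.relEnabledFrom_iff_frequently_atTop hk, TS.enabled_iUnion,
    Filter.frequently_exists]

end TSPath

/-- If a finite union of tasks is relentlessly enabled on a
path, then at least one of the tasks is relentlessly enabled on the path. -/
theorem relEnabled_of_finite_union (G : TS S Tr) (π : TSPath G) (n : ℕ)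
    (Ts : Fin n → Set Tr) (h : π.relEnabledFrom (⋃ i, Ts i) 0) :
    ∃ i : Fin n, π.relEnabledFrom (Ts i) 0 :=
  (π.relEnabledFrom_iUnion_iff (by simp)).1 h
end

section
/- Every infinite path in which no state occurs infinitely often can be transformed into an infinite loop-free path using only states and transitions of the original path, starting at the same initial state, by skipping loops; in particular, if an infinite rooted path avoids a set of states G and contains no state visited infinitely often, then there exists an infinite loop-free rooted path avoiding G. -/
variable {S Tr : Type}

/-- Last index at which the state `st k` occurs (given all states occur finitely often). -/
noncomputable def lastIdx {S : Type} (st : ℕ → S) (k : ℕ) : ℕ :=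
  sSup {i | st i = st k}

lemma lastIdx_spec {S : Type} (st : ℕ → S)
    (hb : ∀ s : S, ∃ m : ℕ, ∀ i : ℕ, m ≤ i → st i ≠ s) (k : ℕ) :
    st (lastIdx st k) = st k ∧ ∀ i : ℕ, st i = st k → i ≤ lastIdx st k := by
  obtain ⟨m, hm⟩ := hb (st k)
  have hbdd : BddAbove {i | st i = st k} := by
    refine ⟨m, fun i hi => ?_⟩
    by_contra h
    exact hm i (le_of_lt (lt_of_not_ge h)) hi
  have hne : {i | st i = st k}.Nonempty := ⟨k, rfl⟩
  constructor
  · exact Nat.sSup_mem hne hbdd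
  · intro i hi
    exact le_csSup hbdd hi

/-- Index sequence of the loop-skipping construction. -/
noncomputable def fIdx {S : Type} (st : ℕ → S) : ℕ → ℕ
  | 0 => 0
  | n + 1 => lastIdx st (fIdx st n) + 1

/-- If an infinite rooted path avoids `Ge` and contains no
state visited infinitely often, then there is an infinite loop-free rooted
path, starting at the same state and using only states and transitions of
the original, avoiding `Ge`. -/
theorem loopFree_of_no_state_infinitely_often (G : TS S Tr) (Ge : Set S)
    (π : TSPath G) (hinf : π.len = ⊤) (hroot : π.rooted)
    (havoid : ∀ i : ℕ, π.state i ∉ Ge)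
    (hnoloop : ¬ ∃ s : S, ∀ m : ℕ, ∃ i : ℕ, m ≤ i ∧ π.state i = s) :
    ∃ π' : TSPath G, π'.len = ⊤ ∧ π'.rooted ∧ π'.state 0 = π.state 0 ∧
      Function.Injective π'.state ∧ (∀ i : ℕ, π'.state i ∉ Ge) ∧
      (∀ i : ℕ, ∃ j : ℕ, π'.state i = π.state j) ∧
      (∀ i : ℕ, ∃ j : ℕ, π'.trans i = π.trans j) := by
  push_neg at hnoloop
  have hb : ∀ s : S, ∃ m : ℕ, ∀ i : ℕ, m ≤ i → π.state i ≠ s := by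
    intro s
    obtain ⟨m, hm⟩ := hnoloop s
    exact ⟨m, fun i hi => hm i hi⟩
  set st := π.state with hst
  have hspec := lastIdx_spec st hb
  set f := fIdx st with hf
  have hlt : ∀ i : ℕ, (i : ℕ∞) < π.len := by
    intro i; rw [hinf]; exact lt_of_le_of_lt (le_refl _) (by exact_mod_cast lt_top_iff_ne_top.mpr (by simp))
  have hfs : ∀ n, π.state (lastIdx st (f n)) = π.state (f n) := fun n => (hspec (f n)).1
  have hmono : StrictMono f := by
    have hstep : ∀ n, f n < f (n + 1) := by
      intro n
      have : f n ≤ lastIdx st (f n) := (hspec (f n)).2 (f n) rfl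
      calc f n ≤ lastIdx st (f n) := this
        _ < lastIdx st (f n) + 1 := Nat.lt_succ_self _
        _ = f (n + 1) := rfl
    exact strictMono_nat_of_lt_succ hstep
  refine ⟨⟨⊤, fun n => π.state (f n), fun n => π.trans (lastIdx st (f n)), ?_, ?_⟩,
    rfl, ?_, ?_, ?_, ?_, ?_, ?_⟩
  · intro i _
    simpa [hfs i] using π.src_ok (lastIdx st (f i)) (hlt _)
  · intro i _
    have := π.tgt_ok (lastIdx st (f i)) (hlt _)
    simpa [hf, fIdx] using this
  · simpa [TSPath.rooted, hf, fIdx] using hroot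
  · rfl
  · have key : ∀ a b : ℕ, a < b → π.state (f a) ≠ π.state (f b) := by
      intro a b h hab
      have h1 : f b ≤ lastIdx st (f a) := (hspec (f a)).2 (f b) hab.symm
      have h2 : f (a + 1) ≤ f b := hmono.le_iff_le.mpr h
      have h3 : lastIdx st (f a) + 1 ≤ f b := h2
      omega
    intro a b hab
    by_contra hne
    rcases Nat.lt_or_ge a b with h | h
    · exact key a b h hab
    · exact key b a (lt_of_le_of_ne h (Ne.symm hne)) hab.symm
  · intro i; exact havoid (f i)
  · intro i; exact ⟨f i, rfl⟩
  · intro i; exact ⟨lastIdx st (f i), rfl⟩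
end

section
/- In the probabilistic setting, if G is an AGEF property and s is a reachable state with p_s < 1, then there exists a finite path s t₁ s₁ ⋯ sₙ t_{n+1} s_{n+1} from s with p_{sᵢ} = p_s for i = 1,…,n and p_{s_{n+1}} < p_s. -/
variable {S Tr : Type}

/-- The end state of the finite run `l` started in state `s`. -/
def TS.runEnd (G : TS S Tr) : S → List Tr → S
  | s, [] => s
  | _, t :: l => TS.runEnd G (G.target t) l

/-- `l` is a run (a finite consecutive sequence of transitions) starting in `s`. -/
def TS.isRun (G : TS S Tr) : S → List Tr → Prop
  | _, [] => True
  | s, t :: l => G.source t = s ∧ TS.isRun G (G.target t) l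

/-- `s'` is reachable from `s`. -/
def TS.reaches (G : TS S Tr) (s s' : S) : Prop :=
  ∃ l : List Tr, G.isRun s l ∧ G.runEnd s l = s'

/-- `s` is reachable from some initial state. -/
def TS.reachable (G : TS S Tr) (s : S) : Prop :=
  ∃ s₀ ∈ G.init, G.reaches s₀ s

/-- `Ge` is an AGEF property: it is reachable from every state that is
reachable from an initial state. -/
def TS.AGEF (G : TS S Tr) (Ge : Set S) : Prop :=
  ∀ s : S, G.reachable s → ∃ g ∈ Ge, G.reaches s g

/-- Strong fairness of transitions: the tasks are all the singletons of
transitions. -/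
def TSPath.STfair {G : TS S Tr} (π : TSPath G) : Prop :=
  π.stronglyFair {T | ∃ t : Tr, T = {t}}

/-- The liveness property `Ge` holds under strong fairness of transitions. -/
def TS.holdsUnderST (G : TS S Tr) (Ge : Set S) : Prop :=
  ∀ π : TSPath G, π.rooted → π.STfair → π.visits Ge

/-- Every infinite rooted path that avoids `Ge` contains a state that is
visited infinitely often (equivalently, has a loop). -/
def TS.infAvoidingHasLoop (G : TS S Tr) (Ge : Set S) : Prop :=
  ∀ π : TSPath G, π.rooted → π.len = ⊤ → (∀ i : ℕ, π.state i ∉ Ge) →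
    ∃ s : S, ∀ m : ℕ, ∃ i : ℕ, m ≤ i ∧ π.state i = s

/-- A probabilistic interpretation of a transition system: each transition
gets a probability in `(0,1]`, and for every state with an outgoing
transition the probabilities of its outgoing transitions sum to 1. -/
def TS.isProbInterp (G : TS S Tr) (p : Tr → ENNReal) : Prop :=
  (∀ t : Tr, 0 < p t ∧ p t ≤ 1) ∧
  ∀ s : S, (∃ t : Tr, G.source t = s) →
    (∑' t : {t : Tr // G.source t = s}, p t.1) = 1

/-- The probability (weight) of a finite run: the product of the
probabilities of its transitions. -/
noncomputable def listWeight (p : Tr → ENNReal) (l : List Tr) : ENNReal :=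
  (l.map p).prod

/-- `l` is a run from `s` that ends in `Ge` without passing through `Ge` on
the way. -/
def TS.hitsFirst (G : TS S Tr) (Ge : Set S) (s : S) (l : List Tr) : Prop :=
  G.isRun s l ∧ G.runEnd s l ∈ Ge ∧
    ∀ l' : List Tr, l' <+: l → l' ≠ l → G.runEnd s l' ∉ Ge

/-- The probability of reaching `Ge` from `s`: the sum, over all runs from
`s` ending in `Ge` and not passing through `Ge` earlier, of their weights. -/
noncomputable def TS.probReach (G : TS S Tr) (Ge : Set S) (p : Tr → ENNReal) (s : S) : ENNReal :=
  ∑' l : {l : List Tr // G.hitsFirst Ge s l}, listWeight p l.1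

/-!
A state `u` of value `c < 1` is not in `Ge`, so its value is the `p`-weighted average of the
values of its successors. Follow a run from `s` to `Ge`: its values start at `pval s < 1` and end
at `1`. At the first step that leaves the level `pval s`, either the value drops, and we are done,
or it rises, and then averaging provides another transition from the same state along which it
drops.
-/

open scoped ENNReal

theorem ENNReal.exists_lt_of_lt_of_eq_tsum_mul {ι : Type*} {w f : ι → ℝ≥0∞} {c : ℝ≥0∞}
    (hw : ∑' j, w j = 1) (hc : c ≠ ∞) (hcf : c = ∑' j, w j * f j) {i : ι} (hwi : w i ≠ 0)
    (hi : c < f i) : ∃ j, f j < c := by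
  by_contra! hle
  have hwi_top : w i ≠ ∞ := ne_top_of_le_ne_top one_ne_top (hw ▸ ENNReal.le_tsum i)
  have hconst : ∑' j, w j * c = c := by rw [ENNReal.tsum_mul_right, hw, one_mul]
  have : ∑' j, w j * c < ∑' j, w j * f j :=
    ENNReal.tsum_lt_tsum (by rwa [hconst]) (fun j => mul_le_mul_right (hle j) _)
      (ENNReal.mul_lt_mul_right hwi hwi_top hi)
  exact this.ne (hconst.trans hcf)

namespace TS

variable (G : TS S Tr)

def IsDescentRun (pval : S → ℝ≥0∞) (c : ℝ≥0∞) (u : S) (l : List Tr) : Prop :=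
  l ≠ [] ∧ G.isRun u l ∧
    (∀ l' : List Tr, l' <+: l → l' ≠ [] → l' ≠ l → pval (G.runEnd u l') = c) ∧
    pval (G.runEnd u l) < c

variable {G} {Ge : Set S} {p : Tr → ℝ≥0∞} {pval : S → ℝ≥0∞} {c : ℝ≥0∞} {u : S} {t : Tr}

theorem isDescentRun_singleton (ht : G.source t = u) (hlt : pval (G.target t) < c) :
    G.IsDescentRun pval c u [t] := by
  refine ⟨List.cons_ne_nil _ _, ⟨ht, trivial⟩, fun l' hl' hne hne' => ?_, hlt⟩
  rcases List.prefix_cons_iff.mp hl' with rfl | ⟨l'', rfl, hl''⟩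
  · exact absurd rfl hne
  · exact absurd (by rw [List.prefix_nil.mp hl'']) hne'

theorem IsDescentRun.cons {l : List Tr} (hl : G.IsDescentRun pval c (G.target t) l)
    (ht : G.source t = u) (heq : pval (G.target t) = c) : G.IsDescentRun pval c u (t :: l) := by
  obtain ⟨hne, hrun, hlevel, hlt⟩ := hl
  refine ⟨List.cons_ne_nil _ _, ⟨ht, hrun⟩, fun l' hl' hne' hne'' => ?_, hlt⟩
  rcases List.prefix_cons_iff.mp hl' with rfl | ⟨l'', rfl, hl''⟩
  · exact absurd rfl hne'
  · rcases eq_or_ne l'' [] with rfl | hl''ne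
    · exact heq
    · exact hlevel l'' hl'' hl''ne (fun h => hne'' (h ▸ rfl))

theorem exists_target_lt_of_lt_target (hp : G.isProbInterp p) (hu : pval u ≠ ∞)
    (havg : pval u = ∑' t : {t : Tr // G.source t = u}, p t.1 * pval (G.target t.1))
    (ht : G.source t = u) (hlt : pval u < pval (G.target t)) :
    ∃ t' : Tr, G.source t' = u ∧ pval (G.target t') < pval u := by
  obtain ⟨⟨t', ht'⟩, hlt'⟩ := ENNReal.exists_lt_of_lt_of_eq_tsum_mul (hp.2 u ⟨t, ht⟩) hu havg
    (i := ⟨t, ht⟩) (hp.1 t).1.ne' hlt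
  exact ⟨t', ht', hlt'⟩

theorem exists_isDescentRun (hp : G.isProbInterp p) (hGe : ∀ s ∈ Ge, pval s = 1)
    (havg : ∀ s : S, s ∉ Ge → (∃ t : Tr, G.source t = s) →
      pval s = ∑' t : {t : Tr // G.source t = s}, p t.1 * pval (G.target t.1))
    (hc : c < 1) {l : List Tr} (hrun : G.isRun u l) (hend : G.runEnd u l ∈ Ge)
    (hu : pval u = c) : ∃ l', G.IsDescentRun pval c u l' := by
  induction l generalizing u with
  | nil => exact absurd (hu ▸ hGe u hend) hc.ne
  | cons t l ih =>
    obtain ⟨ht, hrun⟩ := hrun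
    have huGe : u ∉ Ge := fun h => hc.ne (hu ▸ hGe u h)
    rcases lt_trichotomy (pval (G.target t)) c with hlt | heq | hgt
    · exact ⟨[t], isDescentRun_singleton ht hlt⟩
    · obtain ⟨l', hl'⟩ := ih hrun hend heq
      exact ⟨t :: l', hl'.cons ht heq⟩
    · subst hu
      obtain ⟨t', ht', hlt'⟩ := exists_target_lt_of_lt_target hp (hc.trans ENNReal.one_lt_top).ne
        (havg u huGe ⟨t, ht⟩) ht hgt
      exact ⟨[t'], isDescentRun_singleton ht' hlt'⟩

end TS

theorem descending_path_exists_general (G : TS S Tr) (Ge : Set S)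
    (p : Tr → ENNReal) (hp : G.isProbInterp p)
    (pval : S → ENNReal)
    (hGe : ∀ s ∈ Ge, pval s = 1)
    (havg : ∀ s : S, s ∉ Ge → (∃ t : Tr, G.source t = s) →
      pval s = ∑' t : {t : Tr // G.source t = s}, p t.1 * pval (G.target t.1))
    (hAGEF : G.AGEF Ge) (s : S) (hreach : G.reachable s) (hs : pval s < 1) :
    ∃ l : List Tr, l ≠ [] ∧ G.isRun s l ∧
      (∀ l' : List Tr, l' <+: l → l' ≠ [] → l' ≠ l →
        pval (G.runEnd s l') = pval s) ∧
      pval (G.runEnd s l) < pval s := by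
  obtain ⟨g, hg, l, hrun, rfl⟩ := hAGEF s hreach
  exact G.exists_isDescentRun hp hGe havg hs hrun hg rfl

/-- If `Ge` is an AGEF property and `s` is a reachable state
with `pval s < 1`, then there is a nonempty finite path from `s` all of
whose intermediate states have value `pval s` and whose final state has a
strictly smaller value. -/
theorem descending_path_exists (G : TS S Tr) (Ge : Set S)
    (p : Tr → ENNReal) (hp : G.isProbInterp p)
    (hcb : ∀ s : S, Set.Countable {t : Tr | G.source t = s})
    (pval : S → ENNReal)
    (hGe : ∀ s ∈ Ge, pval s = 1)
    (havg : ∀ s : S, s ∉ Ge → (∃ t : Tr, G.source t = s) →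
      pval s = ∑' t : {t : Tr // G.source t = s}, p t.1 * pval (G.target t.1))
    (hAGEF : G.AGEF Ge) (s : S) (hreach : G.reachable s) (hs : pval s < 1) :
    ∃ l : List Tr, l ≠ [] ∧ G.isRun s l ∧
      (∀ l' : List Tr, l' <+: l → l' ≠ [] → l' ≠ l →
        pval (G.runEnd s l') = pval s) ∧
      pval (G.runEnd s l) < pval s :=
  descending_path_exists_general G Ge p hp pval hGe havg hAGEF s hreach hs
end
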